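/- arXiv:1112.1467 — 7 statements merged into one kernel-verified Lean document; each statement's English description precedes it below -/
import Mathlib

section
/- Let V be a finite elementary abelian p-group, G a finite p-group acting faithfully on V, and S = V ⋊ G. Let A and M be subgroups of S and suppose M ≤ V or V ≤ M (V viewed as a subgroup of S). Then (A ∩ M)_× = A_× ∩ M. -/
/-!
STATEMENT 3 (Lemma 3.3): Let V be a finite elementary abelian p-group, G a finite
p-group acting faithfully on V, and S = V ⋊ G.  Let A and M be subgroups of S with
M ≤ V or V ≤ M.  Then (A ∩ M)_× = A_× ∩ M.
-/

section SDPSetup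

variable {p : ℕ} [Fact p.Prime]
variable {V : Type} [AddCommGroup V] [Module (ZMod p) V] [Finite V]
variable {G : Type} [Group G] [Finite G]

/-- The homomorphism `G →* MulAut (Multiplicative V)` induced by a linear action
`ρ : G →* GL(V)`, used to form the semidirect product `S = V ⋊ G`. -/
def phiOf (ρ : G →* (V ≃ₗ[ZMod p] V)) : G →* MulAut (Multiplicative V) where
  toFun g := AddEquiv.toMultiplicative (ρ g).toAddEquiv
  map_one' := by
    ext x; show Multiplicative.ofAdd ((ρ 1) x.toAdd) = x; rw [map_one]; rfl
  map_mul' g h := by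
    ext x; show Multiplicative.ofAdd ((ρ (g * h)) x.toAdd) = _; rw [map_mul]; rfl

variable (ρ : G →* (V ≃ₗ[ZMod p] V))

/-- The semidirect product `S = V ⋊ G`. -/
abbrev SDP := SemidirectProduct (Multiplicative V) G (phiOf ρ)

/-- `V`, viewed as a subgroup of `S = V ⋊ G`. -/
def Vsub : Subgroup (SDP ρ) := SemidirectProduct.inl.range

/-- `B_× = (B ∩ V)·π(B)`, where `π : S → G` is the canonical projection and `π(B)`
is viewed as a subgroup of `S` via the canonical inclusion `G → S`. -/
def Btimes (B : Subgroup (SDP ρ)) : Subgroup (SDP ρ) :=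
  (B ⊓ Vsub ρ) ⊔ (B.map SemidirectProduct.rightHom).map SemidirectProduct.inr

end SDPSetup

/-!
`A_×` consists of the `v · g` (`v ∈ V`, `g ∈ G`) with `v ∈ A` and `g ∈ π(A)`: the product set
`(A ∩ V)·π(A)` is a subgroup because `π(a)` differs from `a ∈ A` by an element of the
abelian group `V`, so both conjugate `A ∩ V` alike. If `M ≤ V`, then `(A ∩ M)_× = A ∩ M`
and `A_× ∩ V = A ∩ V`. If `V ≤ M`, then `M = π⁻¹(π(M))` and `π(A ∩ M) = π(A) ∩ π(M)`, and
both sides consist of the `v · g` with `v ∈ A` and `g ∈ π(A) ∩ π(M)`.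
-/

theorem Subgroup.map_inf_of_ker_le {G H : Type*} [Group G] [Group H] (f : G →* H)
    (K L : Subgroup G) (hL : f.ker ≤ L) : (K ⊓ L).map f = K.map f ⊓ L.map f := by
  refine le_antisymm (Subgroup.map_inf_le K L f) ?_
  rintro _ ⟨⟨k, hk, rfl⟩, l, hl, hkl⟩
  have hlk : l * k⁻¹ ∈ f.ker := by rw [MonoidHom.mem_ker, map_mul, map_inv, hkl, mul_inv_cancel]
  exact ⟨k, ⟨hk, by simpa using L.mul_mem (L.inv_mem (hL hlk)) hl⟩, rfl⟩

namespace SemidirectProduct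

variable {N G : Type*} [CommGroup N] [Group G] {φ : G →* MulAut N}

theorem inr_right_mem_normalizer_inf_range_inl {B : Subgroup (N ⋊[φ] G)} {b : N ⋊[φ] G}
    (hb : b ∈ B) :
    inr b.right ∈ Subgroup.normalizer ((B ⊓ inl.range : Subgroup _) : Set (N ⋊[φ] G)) := by
  have hb_norm : b ∈ Subgroup.normalizer ((B ⊓ inl.range : Subgroup _) : Set (N ⋊[φ] G)) := by
    have : inl.range.Normal := range_inl_eq_ker_rightHom (φ := φ) ▸ rightHom.normal_ker
    exact Subgroup.inf_normalizer_le_normalizer_inf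
      ⟨B.le_normalizer hb, Subgroup.le_normalizer_of_normal (K := ⊤) (Subgroup.mem_top b)⟩
  have hinl_norm :
      (inl b.left)⁻¹ ∈ Subgroup.normalizer ((B ⊓ inl.range : Subgroup _) : Set (N ⋊[φ] G)) := by
    refine Subgroup.centralizer_le_normalizer _ (Subgroup.mem_centralizer_iff.2 ?_)
    rintro _ ⟨-, n, rfl⟩
    rw [← map_inv, ← map_mul, ← map_mul, mul_comm]
  rw [eq_inv_mul_of_mul_eq (inl_left_mul_inr_right b)]
  exact Subgroup.mul_mem _ hinl_norm hb_norm

theorem mem_inf_range_inl_sup_map_inr_iff {B : Subgroup (N ⋊[φ] G)} {x : N ⋊[φ] G} :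
    x ∈ (B ⊓ inl.range) ⊔ (B.map rightHom).map inr ↔
      inl x.left ∈ B ∧ x.right ∈ B.map rightHom := by
  rw [← SetLike.mem_coe, Subgroup.coe_mul_of_right_le_normalizer_left, Set.mem_mul]
  · constructor
    · rintro ⟨_, ⟨hnB, n, rfl⟩, _, ⟨g, hg, rfl⟩, rfl⟩
      simpa using ⟨hnB, hg⟩
    · rintro ⟨hx, hxr⟩
      exact ⟨inl x.left, ⟨hx, x.left, rfl⟩, inr x.right, ⟨_, hxr, rfl⟩, inl_left_mul_inr_right x⟩
  · rintro _ ⟨_, ⟨b, hb, rfl⟩, rfl⟩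
    exact inr_right_mem_normalizer_inf_range_inl hb

end SemidirectProduct

section Btimes

open SemidirectProduct

variable {p : ℕ} [Fact p.Prime]
variable {V : Type} [AddCommGroup V] [Module (ZMod p) V]
variable {G : Type} [Group G]
variable {ρ : G →* (V ≃ₗ[ZMod p] V)}

theorem Vsub_eq_ker_rightHom : Vsub ρ = rightHom.ker := range_inl_eq_ker_rightHom

theorem mem_Btimes {B : Subgroup (SDP ρ)} {x : SDP ρ} :
    x ∈ Btimes ρ B ↔ inl x.left ∈ B ∧ x.right ∈ B.map rightHom :=
  mem_inf_range_inl_sup_map_inr_iff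

theorem Btimes_eq_self_of_le_Vsub {B : Subgroup (SDP ρ)} (hB : B ≤ Vsub ρ) :
    Btimes ρ B = B := by
  have hπB : B.map rightHom = ⊥ :=
    (Subgroup.map_eq_bot_iff B).2 (hB.trans Vsub_eq_ker_rightHom.le)
  rw [Btimes, hπB, Subgroup.map_bot, sup_bot_eq, inf_of_le_left hB]

theorem Btimes_inf_Vsub (B : Subgroup (SDP ρ)) : Btimes ρ B ⊓ Vsub ρ = B ⊓ Vsub ρ := by
  refine le_antisymm ?_ (le_inf le_sup_left inf_le_right)
  rintro _ ⟨hx, n, rfl⟩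
  exact ⟨(mem_Btimes.1 hx).1, n, rfl⟩

theorem Btimes_inf_of_le_Vsub (A : Subgroup (SDP ρ)) {M : Subgroup (SDP ρ)} (hM : M ≤ Vsub ρ) :
    Btimes ρ (A ⊓ M) = Btimes ρ A ⊓ M :=
  calc Btimes ρ (A ⊓ M) = A ⊓ M := Btimes_eq_self_of_le_Vsub (inf_le_right.trans hM)
    _ = A ⊓ Vsub ρ ⊓ M := by rw [inf_assoc, inf_of_le_right hM]
    _ = Btimes ρ A ⊓ M := by rw [← Btimes_inf_Vsub, inf_assoc, inf_of_le_right hM]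

theorem Btimes_inf_of_Vsub_le (A : Subgroup (SDP ρ)) {M : Subgroup (SDP ρ)} (hM : Vsub ρ ≤ M) :
    Btimes ρ (A ⊓ M) = Btimes ρ A ⊓ M := by
  rw [Vsub_eq_ker_rightHom] at hM
  have hmem_M (y : SDP ρ) : y ∈ M ↔ y.right ∈ M.map rightHom := by
    rw [← rightHom_eq_right, ← Subgroup.mem_comap, Subgroup.comap_map_eq_self hM]
  have hinl_mem_M (n : Multiplicative V) : inl n ∈ M := hM (rightHom_inl n)
  ext x
  simp only [Subgroup.mem_inf, mem_Btimes, Subgroup.map_inf_of_ker_le _ _ _ hM, hmem_M x,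
    hinl_mem_M, and_true]
  tauto

end Btimes

theorem btimes_inf_general
    (p : ℕ) [Fact p.Prime]
    (V : Type) [AddCommGroup V] [Module (ZMod p) V]
    (G : Type) [Group G]
    (ρ : G →* (V ≃ₗ[ZMod p] V))
    (A M : Subgroup (SDP ρ)) (hM : M ≤ Vsub ρ ∨ Vsub ρ ≤ M) :
    Btimes ρ (A ⊓ M) = Btimes ρ A ⊓ M :=
  hM.elim (Btimes_inf_of_le_Vsub A) (Btimes_inf_of_Vsub_le A)

theorem btimes_inf
    (p : ℕ) [Fact p.Prime]
    (V : Type) [AddCommGroup V] [Module (ZMod p) V] [Finite V]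
    (G : Type) [Group G] [Finite G] (hGp : IsPGroup p G)
    (ρ : G →* (V ≃ₗ[ZMod p] V)) (hfaithful : Function.Injective ρ)
    (A M : Subgroup (SDP ρ)) (hM : M ≤ Vsub ρ ∨ Vsub ρ ≤ M) :
    Btimes ρ (A ⊓ M) = Btimes ρ A ⊓ M :=
  btimes_inf_general p V G ρ A M hM
end

section
/- Let V be a finite elementary abelian p-group, G a finite p-group acting faithfully on V, and S = V ⋊ G. If V is an F-module for G, then 𝒜_×(S) is nonempty: there exists an abelian subgroup A of S of maximum order among abelian subgroups of S such that A = A_× and A is not contained in V. -/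
/-!
Take an abelian subgroup `A` of maximum order. If `A ≰ V`, replace it by `A_× = (A ∩ V) π(A)`:
since `V` is abelian, `π(A)` centralizes `A ∩ V`, so `A_×` is abelian, and it has the order of
`A` because `A ∩ V` is the kernel of `π` on `A`. If `A ≤ V`, an offender `E` gives the abelian
product subgroup `C_V(E) E` of order `|E| |C_V(E)| ≥ |V| ≥ |A|`, and it is not contained in `V`
because `E ≠ 1`.
-/

namespace SemidirectProduct

variable {N G : Type*} [Group N] [Group G] {φ : G →* MulAut N}

instance [Finite N] [Finite G] : Finite (N ⋊[φ] G) := Finite.of_equiv _ equivProd.symm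

def prodSubgroup (W : Subgroup N) (K : Subgroup G) (hKW : ∀ g ∈ K, ∀ w ∈ W, φ g w ∈ W) :
    Subgroup (N ⋊[φ] G) where
  carrier := {x | x.left ∈ W ∧ x.right ∈ K}
  one_mem' := ⟨W.one_mem, K.one_mem⟩
  mul_mem' := fun ⟨ha, ha'⟩ ⟨hb, hb'⟩ => ⟨W.mul_mem ha (hKW _ ha' _ hb), K.mul_mem ha' hb'⟩
  inv_mem' := fun ⟨ha, ha'⟩ => ⟨hKW _ (K.inv_mem ha') _ (W.inv_mem ha), K.inv_mem ha'⟩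

section prodSubgroup

variable {W : Subgroup N} {K : Subgroup G} {hKW : ∀ g ∈ K, ∀ w ∈ W, φ g w ∈ W}

@[simp]
theorem mem_prodSubgroup {x : N ⋊[φ] G} :
    x ∈ prodSubgroup W K hKW ↔ x.left ∈ W ∧ x.right ∈ K := Iff.rfl

theorem card_prodSubgroup : Nat.card (prodSubgroup W K hKW) = Nat.card W * Nat.card K := by
  rw [← Nat.card_prod]
  exact Nat.card_congr
    { toFun x := (⟨x.1.left, x.2.1⟩, ⟨x.1.right, x.2.2⟩)
      invFun y := ⟨⟨y.1, y.2⟩, y.1.2, y.2.2⟩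
      left_inv _ := rfl
      right_inv _ := rfl }

theorem isMulCommutative_prodSubgroup [IsMulCommutative W] [IsMulCommutative K]
    (hfix : ∀ g ∈ K, ∀ w ∈ W, φ g w = w) : IsMulCommutative (prodSubgroup W K hKW) := by
  refine .of_setLike_mul_comm fun a ⟨ha, ha'⟩ b ⟨hb, hb'⟩ =>
    SemidirectProduct.ext ?_ (setLike_mul_comm ha' hb')
  rw [mul_left, mul_left, hfix _ ha' _ hb, hfix _ hb' _ ha, setLike_mul_comm ha hb]

theorem comap_inl_prodSubgroup : (prodSubgroup W K hKW).comap inl = W := by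
  ext; simp

theorem map_rightHom_prodSubgroup : (prodSubgroup W K hKW).map rightHom = K := by
  ext g
  exact ⟨fun ⟨x, hx, hxg⟩ => hxg ▸ hx.2, fun hg => ⟨inr g, by simpa using hg, rfl⟩⟩

theorem prodSubgroup_le_range_inl_iff : prodSubgroup W K hKW ≤ inl.range ↔ K = ⊥ := by
  rw [range_inl_eq_ker_rightHom, ← Subgroup.map_eq_bot_iff, map_rightHom_prodSubgroup]

theorem prodSubgroup_eq_map_inl_sup_map_inr : prodSubgroup W K hKW = W.map inl ⊔ K.map inr := by
  refine le_antisymm (fun x hx => ?_) (sup_le ?_ ?_)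
  · rw [← inl_left_mul_inr_right x]
    exact mul_mem (Subgroup.mem_sup_left ⟨_, hx.1, rfl⟩) (Subgroup.mem_sup_right ⟨_, hx.2, rfl⟩)
  · rintro _ ⟨w, hw, rfl⟩
    simpa using hw
  · rintro _ ⟨g, hg, rfl⟩
    simpa using hg

end prodSubgroup

theorem card_eq_card_comap_inl_mul_card_map_rightHom (A : Subgroup (N ⋊[φ] G)) :
    Nat.card A = Nat.card (A.comap inl) * Nat.card (A.map rightHom) := by
  rw [← Subgroup.card_mul_index (rightHom.domRestrict A).ker, Subgroup.index_ker,
    MonoidHom.domRestrict_range]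
  congr 1
  exact Nat.card_congr
    { toFun x := ⟨x.1.1.left, by
        have hx : x.1.1.right = 1 := x.2
        show inl x.1.1.left ∈ A
        rw [show inl x.1.1.left = x.1.1 from SemidirectProduct.ext rfl hx.symm]
        exact x.1.2⟩
      invFun w := ⟨⟨inl w, w.2⟩, rfl⟩
      left_inv x := by
        have hx : x.1.1.right = 1 := x.2
        ext <;> simp [hx]
      right_inv _ := rfl }

theorem map_rightHom_fixes_comap_inl {N : Type*} [CommGroup N] {φ : G →* MulAut N}
    (A : Subgroup (N ⋊[φ] G)) [IsMulCommutative A] :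
    ∀ g ∈ A.map rightHom, ∀ w ∈ A.comap inl, φ g w = w := by
  rintro _ ⟨a, ha, rfl⟩ w hw
  have := congrArg left (setLike_mul_comm ha hw)
  simp only [mul_left, left_inl, right_inl, map_one, MulAut.one_apply, mul_comm w] at this
  exact mul_left_cancel this

end SemidirectProduct

def MonoidHom.fixedSubgroup {N G : Type*} [Group N] [Group G] (φ : G →* MulAut N) (K : Subgroup G) :
    Subgroup N where
  carrier := {n | ∀ g ∈ K, φ g n = n}
  one_mem' _ _ := map_one _
  mul_mem' ha hb g hg := by rw [map_mul, ha g hg, hb g hg]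
  inv_mem' ha g hg := by rw [map_inv, ha g hg]

/-- `A ∈ 𝒜(S)`. -/
def Subgroup.IsMaxCardCommutative {S : Type*} [Group S] (A : Subgroup S) : Prop :=
  IsMulCommutative A ∧ ∀ B : Subgroup S, IsMulCommutative B → Nat.card B ≤ Nat.card A

theorem Subgroup.exists_isMaxCardCommutative (S : Type*) [Group S] [Finite S] :
    ∃ A : Subgroup S, A.IsMaxCardCommutative := by
  have : Nonempty {B : Subgroup S // IsMulCommutative B} := ⟨⟨⊥, inferInstance⟩⟩
  obtain ⟨⟨A, hA⟩, hmax⟩ := Finite.exists_max fun B : {B : Subgroup S // IsMulCommutative B} =>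
    Nat.card B.1
  exact ⟨A, hA, fun B hB => hmax ⟨B, hB⟩⟩

theorem Subgroup.IsMaxCardCommutative.of_card_le {S : Type*} [Group S] {A B : Subgroup S}
    (hA : A.IsMaxCardCommutative) (hB : IsMulCommutative B) (h : Nat.card A ≤ Nat.card B) :
    B.IsMaxCardCommutative :=
  ⟨hB, fun C hC => (hA.2 C hC).trans h⟩

section FModule

open SemidirectProduct

variable {p : ℕ} [Fact p.Prime] {V : Type} [AddCommGroup V] [Module (ZMod p) V]
  {G : Type} [Group G] (ρ : G →* (V ≃ₗ[ZMod p] V))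

theorem card_Vsub : Nat.card (Vsub ρ) = Nat.card V :=
  Nat.card_range_of_injective inl_injective

theorem card_fixedSubgroup_phiOf (E : Subgroup G) :
    Nat.card ((phiOf ρ).fixedSubgroup E) = Nat.card {v : V | ∀ g ∈ E, ρ g v = v} :=
  Nat.card_congr (Multiplicative.toAdd.subtypeEquiv fun _ => Iff.rfl)

theorem Btimes_prodSubgroup {W : Subgroup (Multiplicative V)} {K : Subgroup G}
    {hKW : ∀ g ∈ K, ∀ w ∈ W, phiOf ρ g w ∈ W} :
    Btimes ρ (prodSubgroup W K hKW) = prodSubgroup W K hKW := by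
  rw [Btimes, Vsub, inf_comm, ← Subgroup.map_comap_eq, comap_inl_prodSubgroup,
    map_rightHom_prodSubgroup, prodSubgroup_eq_map_inl_sup_map_inr]

end FModule

open SemidirectProduct in
theorem ATimes_nonempty_general
    (p : ℕ) [Fact p.Prime]
    (V : Type) [AddCommGroup V] [Module (ZMod p) V] [Finite V]
    (G : Type) [Group G] [Finite G]
    (ρ : G →* (V ≃ₗ[ZMod p] V))
    -- `V` is an F-module for `G`
    (hF : ∃ E : Subgroup G, E ≠ ⊥ ∧ (∀ x ∈ E, ∀ y ∈ E, x * y = y * x) ∧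
      (∀ x ∈ E, x ^ p = 1) ∧
      Nat.card V ≤ Nat.card E * Nat.card {v : V | ∀ g ∈ E, ρ g v = v}) :
    -- `𝒜_×(S)` is nonempty
    ∃ A : Subgroup (SDP ρ),
      (IsMulCommutative A ∧
        ∀ B : Subgroup (SDP ρ), IsMulCommutative B → Nat.card B ≤ Nat.card A) ∧
      A = Btimes ρ A ∧ ¬ A ≤ Vsub ρ := by
  obtain ⟨A, hA⟩ := Subgroup.exists_isMaxCardCommutative (SDP ρ)
  obtain ⟨W, K, hKcomm, hfix, hK, hcard⟩ : ∃ (W : Subgroup (Multiplicative V)) (K : Subgroup G),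
      IsMulCommutative K ∧ (∀ g ∈ K, ∀ w ∈ W, phiOf ρ g w = w) ∧ K ≠ ⊥ ∧
      Nat.card A ≤ Nat.card W * Nat.card K := by
    by_cases hAV : A ≤ Vsub ρ
    · obtain ⟨E, hE, hEcomm, -, hEcard⟩ := hF
      refine ⟨(phiOf ρ).fixedSubgroup E, E, .of_setLike_mul_comm hEcomm, fun g hg w hw => hw g hg,
        hE, ?_⟩
      calc Nat.card A ≤ Nat.card (Vsub ρ) := Subgroup.card_le_of_le hAV
        _ = Nat.card V := card_Vsub ρ
        _ ≤ _ := by rw [card_fixedSubgroup_phiOf, mul_comm]; exact hEcard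
    · have := hA.1
      refine ⟨A.comap inl, A.map rightHom, inferInstance, map_rightHom_fixes_comap_inl A, ?_,
        (card_eq_card_comap_inl_mul_card_map_rightHom A).le⟩
      rwa [Ne, Subgroup.map_eq_bot_iff, ← range_inl_eq_ker_rightHom]
  have hKW : ∀ g ∈ K, ∀ w ∈ W, phiOf ρ g w ∈ W := fun g hg w hw => (hfix g hg w hw).symm ▸ hw
  refine ⟨prodSubgroup W K hKW, hA.of_card_le (isMulCommutative_prodSubgroup hfix) ?_,
    (Btimes_prodSubgroup ρ).symm, prodSubgroup_le_range_inl_iff.not.2 hK⟩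
  rwa [card_prodSubgroup]

theorem ATimes_nonempty
    (p : ℕ) [Fact p.Prime]
    (V : Type) [AddCommGroup V] [Module (ZMod p) V] [Finite V]
    (G : Type) [Group G] [Finite G] (hGp : IsPGroup p G)
    (ρ : G →* (V ≃ₗ[ZMod p] V)) (hfaithful : Function.Injective ρ)
    -- `V` is an F-module for `G`
    (hF : ∃ E : Subgroup G, E ≠ ⊥ ∧ (∀ x ∈ E, ∀ y ∈ E, x * y = y * x) ∧
      (∀ x ∈ E, x ^ p = 1) ∧
      Nat.card V ≤ Nat.card E * Nat.card {v : V | ∀ g ∈ E, ρ g v = v}) :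
    -- `𝒜_×(S)` is nonempty
    ∃ A : Subgroup (SDP ρ),
      (IsMulCommutative A ∧
        ∀ B : Subgroup (SDP ρ), IsMulCommutative B → Nat.card B ≤ Nat.card A) ∧
      A = Btimes ρ A ∧ ¬ A ≤ Vsub ρ :=
  ATimes_nonempty_general p V G ρ hF
end

section
/- Let p be a prime and n ≥ 1. Suppose a_1, …, a_k are pairwise commuting elements of GL(n, 𝔽_p) with (a_i − 1)² = 0 for each i. Then (a_1 a_2 ⋯ a_k − 1)^{k+1} = 0; that is, the minimal polynomial of the product a_1 ⋯ a_k has degree at most k + 1. -/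
/-!
For commuting `a`, `b` one has `a * b - 1 = (a - 1) * b + (b - 1)`, a sum of two commuting
terms whose first summand squares to zero when `(a - 1) ^ 2 = 0`. By the binomial theorem, each
factor `a` with `(a - 1) ^ 2 = 0` therefore raises the nilpotency index of `P - 1` by at most one,
and induction on the number of factors gives the bound `k + 1`.
-/

theorem Commute.mul_sub_one_pow_succ_eq_zero {R : Type*} [Ring R] {a b : R} (h : Commute a b)
    {n : ℕ} (ha : (a - 1) ^ 2 = 0) (hb : (b - 1) ^ n = 0) : (a * b - 1) ^ (n + 1) = 0 := by
  have hab : Commute (a - 1) b := h.sub_left (Commute.one_left b)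
  have hsq : ((a - 1) * b) ^ 2 = 0 := by rw [hab.mul_pow, ha, zero_mul]
  have hsum : Commute ((a - 1) * b) (b - 1) :=
    (hab.mul_left (Commute.refl b)).sub_right (Commute.one_right _)
  rw [show a * b - 1 = (a - 1) * b + (b - 1) by noncomm_ring]
  exact hsum.add_pow_eq_zero_of_add_le_succ_of_pow_eq_zero hsq hb (by omega)

theorem List.prod_sub_one_pow_length_succ_eq_zero {R : Type*} [Ring R] {l : List R}
    (hl : l.Pairwise Commute) (hsq : ∀ x ∈ l, (x - 1) ^ 2 = 0) :
    (l.prod - 1) ^ (l.length + 1) = 0 := by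
  induction l with
  | nil => simp
  | cons a l ih =>
    obtain ⟨ha, hl⟩ := List.pairwise_cons.mp hl
    rw [List.prod_cons, List.length_cons]
    exact (Commute.list_prod_right _ _ ha).mul_sub_one_pow_succ_eq_zero
      (hsq a List.mem_cons_self) (ih hl fun x hx => hsq x (List.mem_cons_of_mem a hx))

theorem commuting_quadratics_product_bound_general
    (p : ℕ) (n : ℕ) (k : ℕ)
    (a : Fin k → Matrix.GeneralLinearGroup (Fin n) (ZMod p))
    (hcomm : ∀ i j, Commute (a i) (a j))
    (hquad : ∀ i, ((a i : Matrix (Fin n) (Fin n) (ZMod p)) - 1) ^ 2 = 0) :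
    ((((List.ofFn a).prod : Matrix.GeneralLinearGroup (Fin n) (ZMod p)) :
        Matrix (Fin n) (Fin n) (ZMod p)) - 1) ^ (k + 1) = 0 := by
  have hprod := List.prod_sub_one_pow_length_succ_eq_zero
    (l := List.ofFn fun i => (a i : Matrix (Fin n) (Fin n) (ZMod p)))
    (List.pairwise_ofFn.mpr fun i j _ => (hcomm i j).units_val)
    (by simpa [List.mem_ofFn] using hquad)
  rw [List.length_ofFn] at hprod
  rwa [← Units.coeHom_apply, map_list_prod, List.map_ofFn]

theorem commuting_quadratics_product_bound
    (p : ℕ) [Fact p.Prime] (n : ℕ) (hn : 1 ≤ n) (k : ℕ)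
    (a : Fin k → Matrix.GeneralLinearGroup (Fin n) (ZMod p))
    (hcomm : ∀ i j, Commute (a i) (a j))
    (hquad : ∀ i, ((a i : Matrix (Fin n) (Fin n) (ZMod p)) - 1) ^ 2 = 0) :
    ((((List.ofFn a).prod : Matrix.GeneralLinearGroup (Fin n) (ZMod p)) :
        Matrix (Fin n) (Fin n) (ZMod p)) - 1) ^ (k + 1) = 0 :=
  commuting_quadratics_product_bound_general p n k a hcomm hquad
end

section
/- Let p be a prime. Suppose V is a finite elementary abelian p-group and G is a finite p-group acting faithfully on V. Let a ∈ G be a quadratic element, let x ∈ G, and suppose c := [a, x] ≠ 1 centralizes both a and x. Then c is a quadratic element on V, i.e., c ≠ 1 and (c − 1)² = 0 on V. -/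
/-!
Put `b := x⁻¹ a x = a c`. It is quadratic, commutes with `a` (as `c` does), and `c = a⁻¹ b`, so
`(c - 1)² = a⁻² (b - a)²`. With `u = a - 1`, `v = b - 1` (commuting, `u² = v² = 0`) one gets
`(b - a)² = -2uv`. Conjugating once more, `x⁻² a x² = a⁻¹ b²` is quadratic too, so
`0 = (b² - a)² = (2v - u)² = -4uv`. Over a field `4uv = 0` forces `2uv = 0` (either `2 = 0` or
`2` is invertible), hence `(c - 1)² = 0`.
-/

section Group

variable {G : Type*} [Group G]

theorem conj_conj_eq_inv_mul_sq {a c x : G} (hb : x⁻¹ * a * x = a * c) (hca : Commute c a)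
    (hcx : Commute c x) : x⁻¹ * (x⁻¹ * a * x) * x = a⁻¹ * (x⁻¹ * a * x) ^ 2 := by
  have hcx' : x⁻¹ * c * x = c := by rw [← hcx.inv_right.eq, inv_mul_cancel_right]
  calc x⁻¹ * (x⁻¹ * a * x) * x = x⁻¹ * (a * c) * x := by rw [hb]
    _ = x⁻¹ * a * x * (x⁻¹ * c * x) := by group
    _ = a * c * c := by rw [hcx', hb]
    _ = a⁻¹ * (x⁻¹ * a * x) ^ 2 := by
      rw [hb, sq, ← mul_assoc a⁻¹, ← mul_assoc a⁻¹, inv_mul_cancel, one_mul, ← mul_assoc,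
        hca.eq]

end Group

section Ring

variable {R : Type*} [Ring R]

theorem Commute.natCast_mul_sub_sq {u v : R} (h : Commute u v) (hu : u ^ 2 = 0) (hv : v ^ 2 = 0)
    (n : ℕ) : (n * v - u) ^ 2 = -(2 * n * (u * v)) := by
  have hnv : Commute ((n : R) * v) (-u) := (h.symm.natCast_mul_left n).neg_right
  rw [sub_eq_add_neg, hnv.add_sq, (Nat.cast_commute n v).mul_pow, hv, neg_sq, hu, h.eq]
  noncomm_ring

theorem sq_sub_eq_zero_of_sq_sq_sub_eq_zero (K : Type*) [DivisionRing K] [Module K R] {A B : R}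
    (hAB : Commute A B) (hA : (A - 1) ^ 2 = 0) (hB : (B - 1) ^ 2 = 0) (h : (B ^ 2 - A) ^ 2 = 0) :
    (B - A) ^ 2 = 0 := by
  have huv : Commute (A - 1) (B - 1) :=
    (hAB.sub_left (Commute.one_left B)).sub_right (Commute.one_right _)
  have hBA : (B - A) ^ 2 = -(2 * ((A - 1) * (B - 1))) := by
    simpa using huv.natCast_mul_sub_sq hA hB 1
  have hB2A : (B ^ 2 - A) ^ 2 = -(2 * (2 * ((A - 1) * (B - 1)))) := by
    have : B ^ 2 - A = (2 : ℕ) * (B - 1) - (A - 1) + (B - 1) ^ 2 := by push_cast; noncomm_ring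
    rw [this, hB, add_zero, huv.natCast_mul_sub_sq hA hB 2, Nat.cast_ofNat, mul_assoc]
  have h4 : (2 : K) • (2 : K) • ((A - 1) * (B - 1)) = 0 := by
    rw [two_smul, two_smul, ← two_mul, ← two_mul, ← neg_eq_zero, ← hB2A, h]
  rw [hBA, neg_eq_zero, two_mul, ← two_smul K]
  exact (smul_eq_zero.mp h4).elim (fun h2 => by rw [h2, zero_smul]) id

variable {G : Type*} [Group G] (φ : G →* R)

theorem sq_map_conj_sub_one_eq_zero {g : G} (hg : (φ g - 1) ^ 2 = 0) (x : G) :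
    (φ (x⁻¹ * g * x) - 1) ^ 2 = 0 := by
  have hconj : φ (x⁻¹ * g * x) - 1 = φ x⁻¹ * (φ g - 1) * φ x := by
    rw [mul_sub_one, sub_mul, ← map_mul, ← map_mul, ← map_mul, inv_mul_cancel, map_one]
  calc (φ (x⁻¹ * g * x) - 1) ^ 2 = φ x⁻¹ * (φ g - 1) * (φ x * φ x⁻¹) * (φ g - 1) * φ x := by
        rw [sq, hconj]; noncomm_ring
    _ = φ x⁻¹ * (φ g - 1) ^ 2 * φ x := by rw [← map_mul, mul_inv_cancel, map_one]; noncomm_ring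
    _ = 0 := by rw [hg, mul_zero, zero_mul]

theorem sq_map_inv_mul_sub_one_eq_zero_iff {g h : G} (hgh : Commute g h) :
    (φ (g⁻¹ * h) - 1) ^ 2 = 0 ↔ (φ h - φ g) ^ 2 = 0 := by
  have hinv : φ (g⁻¹ * h) - 1 = φ g⁻¹ * (φ h - φ g) := by
    rw [mul_sub, ← map_mul, ← map_mul, inv_mul_cancel, map_one]
  have hcomm : Commute (φ g⁻¹) (φ h - φ g) :=
    (hgh.inv_left.map φ).sub_right ((Commute.refl g).inv_left.map φ)
  rw [hinv, hcomm.mul_pow, ((Group.isUnit g⁻¹).map φ).pow 2 |>.mul_right_eq_zero]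

end Ring

theorem quadratic_commutator_general
    (p : ℕ) [Fact p.Prime]
    (V : Type) [AddCommGroup V] [Module (ZMod p) V]
    (G : Type) [Group G]
    (ρ : G →* (V ≃ₗ[ZMod p] V))
    (a x : G)
    -- `a` is a quadratic element
    (haq : ((ρ a : Module.End (ZMod p) V) - 1) ^ 2 = 0)
    -- `c = [a, x] ≠ 1` centralizes both `a` and `x`
    (hc1 : a⁻¹ * x⁻¹ * a * x ≠ 1)
    (hca : Commute (a⁻¹ * x⁻¹ * a * x) a)
    (hcx : Commute (a⁻¹ * x⁻¹ * a * x) x) :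
    -- `c` is a quadratic element on `V`
    a⁻¹ * x⁻¹ * a * x ≠ 1 ∧
      ((ρ (a⁻¹ * x⁻¹ * a * x) : Module.End (ZMod p) V) - 1) ^ 2 = 0 := by
  refine ⟨hc1, ?_⟩
  let φ : G →* Module.End (ZMod p) V := LinearEquiv.automorphismGroup.toLinearMapMonoidHom.comp ρ
  change (φ a - 1) ^ 2 = 0 at haq
  change (φ (a⁻¹ * x⁻¹ * a * x) - 1) ^ 2 = 0
  have hb : x⁻¹ * a * x = a * (a⁻¹ * x⁻¹ * a * x) := by group
  have hab : Commute a (x⁻¹ * a * x) := hb ▸ (Commute.refl a).mul_right hca.symm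
  have hbq := sq_map_conj_sub_one_eq_zero φ haq x
  have hb2q : (φ (x⁻¹ * a * x) ^ 2 - φ a) ^ 2 = 0 := by
    have hx2 := sq_map_conj_sub_one_eq_zero φ hbq x
    rwa [conj_conj_eq_inv_mul_sq hb hca hcx,
      sq_map_inv_mul_sub_one_eq_zero_iff φ (hab.pow_right 2), map_pow] at hx2
  rw [show a⁻¹ * x⁻¹ * a * x = a⁻¹ * (x⁻¹ * a * x) by group,
    sq_map_inv_mul_sub_one_eq_zero_iff φ hab]
  exact sq_sub_eq_zero_of_sq_sq_sub_eq_zero (ZMod p) (hab.map φ) haq hbq hb2q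

theorem quadratic_commutator
    (p : ℕ) [Fact p.Prime]
    (V : Type) [AddCommGroup V] [Module (ZMod p) V] [Finite V]
    (G : Type) [Group G] [Finite G] (hGp : IsPGroup p G)
    (ρ : G →* (V ≃ₗ[ZMod p] V)) (hfaithful : Function.Injective ρ)
    (a x : G)
    -- `a` is a quadratic element
    (ha1 : a ≠ 1) (haq : ((ρ a : Module.End (ZMod p) V) - 1) ^ 2 = 0)
    -- `c = [a, x] ≠ 1` centralizes both `a` and `x`
    (hc1 : a⁻¹ * x⁻¹ * a * x ≠ 1)
    (hca : Commute (a⁻¹ * x⁻¹ * a * x) a)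
    (hcx : Commute (a⁻¹ * x⁻¹ * a * x) x) :
    -- `c` is a quadratic element on `V`
    a⁻¹ * x⁻¹ * a * x ≠ 1 ∧
      ((ρ (a⁻¹ * x⁻¹ * a * x) : Module.End (ZMod p) V) - 1) ^ 2 = 0 :=
  quadratic_commutator_general p V G ρ a x haq hc1 hca hcx
end

section
/- Let p be a prime, V a finite-dimensional vector space over 𝔽_p, and G a subgroup of GL(V). Suppose b ∈ G satisfies (b − 1)² = 0 and the normal closure W = ⟨b^G⟩ of b in G is abelian. Then for any elements x_1, …, x_k ∈ G, the left-normed iterated commutator z = [b, x_1, x_2, …, x_k] satisfies (z − 1)^{2^k + 1} = 0 on V; in particular the minimal polynomial of z on V has degree at most 2^k + 1. -/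
/-!
Write `a ~ n` for `(a - 1)^(n + 1) = 0`. If `a ~ n` and `y` normalises the abelian group `W ∋ a`,
then `[a, y] = a⁻¹ · (y⁻¹ a y)` is a product of two commuting elements of `W`, each `~ n`, and
`(uv - 1) = (u - 1)v + (v - 1)` with commuting summands gives `[a, y] ~ 2n`. Starting from
`b ~ 1` and iterating `k` times gives `[b, x₁, …, x_k] ~ 2^k`.
-/

section Unipotent

variable {R : Type*} [Ring R]

theorem Units.inv_sub_one_pow_eq_zero (u : Rˣ) {m : ℕ} (h : ((u : R) - 1) ^ m = 0) :
    (((u⁻¹ : Rˣ) : R) - 1) ^ m = 0 := by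
  have hdecomp : ((u⁻¹ : Rˣ) : R) - 1 = -((u⁻¹ : Rˣ) : R) * ((u : R) - 1) := by
    rw [neg_mul, mul_sub, mul_one, Units.inv_mul, neg_sub]
  have hcomm : Commute (-((u⁻¹ : Rˣ) : R)) ((u : R) - 1) :=
    ((Commute.units_inv_left (Commute.refl (u : R))).sub_right (Commute.one_right _)).neg_left
  rw [hdecomp, hcomm.mul_pow, h, mul_zero]

theorem Units.conj_sub_one_pow_eq_zero (u : Rˣ) {a : R} {m : ℕ} (h : (a - 1) ^ m = 0) :
    (((u⁻¹ : Rˣ) : R) * a * u - 1) ^ m = 0 := by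
  have hdecomp : ((u⁻¹ : Rˣ) : R) * a * u - 1 = ((u⁻¹ : Rˣ) : R) * (a - 1) * u := by
    rw [mul_sub, mul_one, sub_mul, Units.inv_mul]
  rw [hdecomp, Units.conj_pow', h, mul_zero, zero_mul]

theorem Commute.mul_sub_one_pow_eq_zero {a c : R} (h : Commute a c) {m n : ℕ}
    (ha : (a - 1) ^ (m + 1) = 0) (hc : (c - 1) ^ (n + 1) = 0) :
    (a * c - 1) ^ (m + n + 1) = 0 := by
  have hdecomp : a * c - 1 = (a - 1) * c + (c - 1) := by noncomm_ring
  have hac : Commute (a - 1) c := h.sub_left (Commute.one_left c)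
  have hsummands : Commute ((a - 1) * c) (c - 1) :=
    (hac.sub_right (Commute.one_right _)).mul_left ((Commute.refl c).sub_right (Commute.one_right c))
  have hfirst : ((a - 1) * c) ^ (m + 1) = 0 := by rw [hac.mul_pow, ha, zero_mul]
  rw [hdecomp]
  exact hsummands.add_pow_eq_zero_of_add_le_succ_of_pow_eq_zero hfirst hc (by omega)

theorem Units.commutator_sub_one_pow_eq_zero {a y : Rˣ} (h : Commute a⁻¹ (y⁻¹ * a * y))
    {n : ℕ} (ha : ((a : R) - 1) ^ (n + 1) = 0) :
    (((a⁻¹ * y⁻¹ * a * y : Rˣ) : R) - 1) ^ (2 * n + 1) = 0 := by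
  have hprod : a⁻¹ * y⁻¹ * a * y = a⁻¹ * (y⁻¹ * a * y) := by group
  rw [hprod, Units.val_mul, two_mul]
  refine h.units_val.mul_sub_one_pow_eq_zero (a.inv_sub_one_pow_eq_zero ha) ?_
  simpa only [Units.val_mul] using y.conj_sub_one_pow_eq_zero ha

theorem List.foldl_commutator_sub_one_pow_eq_zero {W : Subgroup Rˣ}
    (hW : ∀ x ∈ W, ∀ y ∈ W, x * y = y * x) :
    ∀ (l : List Rˣ), (∀ y ∈ l, ∀ w ∈ W, y⁻¹ * w * y ∈ W) →
      ∀ {a : Rˣ}, a ∈ W → ∀ {n : ℕ}, ((a : R) - 1) ^ (n + 1) = 0 →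
        (((l.foldl (fun z y => z⁻¹ * y⁻¹ * z * y) a : Rˣ) : R) - 1) ^ (2 ^ l.length * n + 1) = 0
  | [], _, _, _, _, ha => by simpa using ha
  | y :: l, hl, a, haW, n, ha => by
    have hconj : y⁻¹ * a * y ∈ W := hl y List.mem_cons_self a haW
    have hcommutator : a⁻¹ * y⁻¹ * a * y ∈ W := by
      simpa only [mul_assoc] using W.mul_mem (W.inv_mem haW) hconj
    have hexp : 2 ^ (y :: l).length * n + 1 = 2 ^ l.length * (2 * n) + 1 := by
      rw [List.length_cons, pow_succ]; ring
    rw [List.foldl_cons, hexp]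
    exact foldl_commutator_sub_one_pow_eq_zero hW l (fun z hz => hl z (List.mem_cons_of_mem y hz))
      hcommutator (Units.commutator_sub_one_pow_eq_zero (hW _ (W.inv_mem haW) _ hconj) ha)

end Unipotent

theorem Subgroup.conj_mem_closure_conjugates {H : Type*} [Group H] {G : Subgroup H} (b : H)
    {g : H} (hg : g ∈ G) {w : H} (hw : w ∈ closure {v | ∃ h ∈ G, v = h⁻¹ * b * h}) :
    g⁻¹ * w * g ∈ closure {v | ∃ h ∈ G, v = h⁻¹ * b * h} := by
  induction hw using closure_induction with
  | mem v hv =>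
    obtain ⟨h, hh, rfl⟩ := hv
    exact subset_closure ⟨h * g, mul_mem hh hg, by group⟩
  | one => rw [mul_one, inv_mul_cancel]; exact one_mem _
  | mul u v _ _ hu hv => simpa only [mul_assoc, mul_inv_cancel_left] using mul_mem hu hv
  | inv v _ hv => simpa only [mul_inv_rev, inv_inv, mul_assoc] using inv_mem hv

theorem iterated_commutator_minpoly_bound_general
    (p : ℕ)
    (V : Type) [AddCommGroup V] [Module (ZMod p) V]
    -- `G` a subgroup of `GL(V) = (End V)ˣ`
    (G : Subgroup (Module.End (ZMod p) V)ˣ)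
    (b : (Module.End (ZMod p) V)ˣ)
    -- `(b − 1)² = 0`
    (hb : ((b : Module.End (ZMod p) V) - 1) ^ 2 = 0)
    -- the normal closure `W = ⟨b^G⟩` of `b` in `G` is abelian
    (hW : ∀ x ∈ Subgroup.closure {w : (Module.End (ZMod p) V)ˣ | ∃ g ∈ G, w = g⁻¹ * b * g},
        ∀ y ∈ Subgroup.closure {w : (Module.End (ZMod p) V)ˣ | ∃ g ∈ G, w = g⁻¹ * b * g},
        x * y = y * x)
    (k : ℕ) (x : Fin k → (Module.End (ZMod p) V)ˣ) (hx : ∀ i, x i ∈ G) :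
    -- `z = [b, x_1, …, x_k]` satisfies `(z − 1)^{2^k + 1} = 0`
    ((((List.ofFn x).foldl (fun z y => z⁻¹ * y⁻¹ * z * y) b :
        (Module.End (ZMod p) V)ˣ) : Module.End (ZMod p) V) - 1) ^ (2 ^ k + 1) = 0 := by
  set W := Subgroup.closure {w : (Module.End (ZMod p) V)ˣ | ∃ g ∈ G, w = g⁻¹ * b * g}
  have hnormal : ∀ y ∈ List.ofFn x, ∀ w ∈ W, y⁻¹ * w * y ∈ W := by
    intro y hy w hw
    obtain ⟨i, rfl⟩ := List.mem_ofFn.mp hy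
    exact Subgroup.conj_mem_closure_conjugates b (hx i) hw
  have hbW : b ∈ W := Subgroup.subset_closure ⟨1, G.one_mem, by group⟩
  simpa using (List.ofFn x).foldl_commutator_sub_one_pow_eq_zero hW hnormal hbW (n := 1) hb

theorem iterated_commutator_minpoly_bound
    (p : ℕ) [Fact p.Prime]
    (V : Type) [AddCommGroup V] [Module (ZMod p) V] [FiniteDimensional (ZMod p) V]
    -- `G` a subgroup of `GL(V) = (End V)ˣ`
    (G : Subgroup (Module.End (ZMod p) V)ˣ)
    (b : (Module.End (ZMod p) V)ˣ) (hbG : b ∈ G)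
    -- `(b − 1)² = 0`
    (hb : ((b : Module.End (ZMod p) V) - 1) ^ 2 = 0)
    -- the normal closure `W = ⟨b^G⟩` of `b` in `G` is abelian
    (hW : ∀ x ∈ Subgroup.closure {w : (Module.End (ZMod p) V)ˣ | ∃ g ∈ G, w = g⁻¹ * b * g},
        ∀ y ∈ Subgroup.closure {w : (Module.End (ZMod p) V)ˣ | ∃ g ∈ G, w = g⁻¹ * b * g},
        x * y = y * x)
    (k : ℕ) (x : Fin k → (Module.End (ZMod p) V)ˣ) (hx : ∀ i, x i ∈ G) :
    -- `z = [b, x_1, …, x_k]` satisfies `(z − 1)^{2^k + 1} = 0`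
    ((((List.ofFn x).foldl (fun z y => z⁻¹ * y⁻¹ * z * y) b :
        (Module.End (ZMod p) V)ˣ) : Module.End (ZMod p) V) - 1) ^ (2 ^ k + 1) = 0 :=
  iterated_commutator_minpoly_bound_general p V G b hb hW k x hx
end

section
/- Let S be a finite p-group and A an abelian subgroup of S. Let v ∈ S be an element for which N = [v, A] (the subgroup generated by the commutators [v, a] with a ∈ A) is abelian, and set A* = N·C_A(N). Then A* is an abelian subgroup of S and |A ∩ M| ≤ |A* ∩ M| for every normal subgroup M of S; in particular |A| ≤ |A*|. -/
/-!
Write `[v, a] = v⁻¹a⁻¹va` and `C = C_A(N)`. If `a, b ∈ A` and `[v, a]⁻¹[v, b] ∈ A`, then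
`d = ba⁻¹` satisfies `[v, d] ∈ A` (the quotient is a conjugate of `[v, d]` by `a`), and expanding
`[v, ad] = [v, da]` in the two possible ways, with `A` and `N` abelian, shows that `d` centralises
`N`. So `a ↦ [v, a]` maps `A ∩ M` into `N ∩ M` such that elements with the same image modulo `A`
differ by an element of `C ∩ M`, whence
`|A ∩ M| ≤ |N ∩ M : A ∩ N ∩ M| · |C ∩ M| ≤ |(N ∩ M)(C ∩ M)| ≤ |A* ∩ M|`,
the middle step because `(N ∩ M) ∩ (C ∩ M) ≤ A`. Finally `A* = N ⊔ C` is abelian since `N` and `C`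
are abelian and `C` centralises `N`.
-/

/-- `N = [v, A]`: the subgroup generated by the commutators `[v, a] = v⁻¹a⁻¹va`, `a ∈ A`. -/
def commSubgroup {S : Type} [Group S] (v : S) (A : Subgroup S) : Subgroup S :=
  Subgroup.closure {x : S | ∃ a ∈ A, x = v⁻¹ * a⁻¹ * v * a}

/-- `A* = N·C_A(N)` where `N = [v, A]`. -/
def replacementSubgroup {S : Type} [Group S] (v : S) (A : Subgroup S) : Subgroup S :=
  commSubgroup v A ⊔ (A ⊓ Subgroup.centralizer ((commSubgroup v A : Subgroup S) : Set S))

open Subgroup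

theorem Subgroup.isMulCommutative_sup {G : Type*} [Group G] {H K : Subgroup G}
    [IsMulCommutative H] [IsMulCommutative K] (hHK : K ≤ centralizer H) :
    IsMulCommutative ↥(H ⊔ K) := by
  refine le_centralizer_iff_isMulCommutative.mp (sup_le ?_ ?_) <;> rw [le_centralizer_iff]
  · exact sup_le (le_centralizer H) hHK
  · exact sup_le (le_centralizer_iff.mp hHK) (le_centralizer K)

theorem Subgroup.card_le_card_mul_card_of_mul_inv_mem {G Q : Type*} [Group G] [Finite Q]
    {H K : Subgroup G} [Finite K] (f : H → Q)
    (hf : ∀ a b : H, f a = f b → (b : G) * (a : G)⁻¹ ∈ K) :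
    Nat.card H ≤ Nat.card Q * Nat.card K := by
  classical
  -- Each element of a fibre is determined by its quotient with a chosen element of that fibre.
  let rep : H → H := fun a => Function.invFun f (f a)
  have hrep (a : H) : f (rep a) = f a := Function.invFun_eq ⟨a, rfl⟩
  let J : H → Q × K := fun a => (f a, ⟨a * (rep a : G)⁻¹, hf _ _ (hrep a)⟩)
  have hJ : Function.Injective J := by
    intro a b hab
    simp only [J, Prod.mk.injEq, Subtype.mk.injEq] at hab
    obtain ⟨hfab, hab⟩ := hab
    simp only [rep, hfab] at hab
    exact Subtype.ext (mul_right_cancel hab)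
  simpa only [Nat.card_prod] using Nat.card_le_card_of_injective J hJ

theorem Subgroup.relIndex_mul_card_le_card_sup {G : Type*} [Group G] {X Y W : Subgroup G}
    [Finite ↥(X ⊔ Y)] (hXY : X ⊓ Y ≤ W) :
    W.relIndex X * Nat.card Y ≤ Nat.card ↥(X ⊔ Y) := by
  rw [relIndex, index]
  let K : (X ⧸ W.subgroupOf X) × Y → ↥(X ⊔ Y) := fun z =>
    ⟨(z.1.out : G) * z.2, mul_mem (mem_sup_left z.1.out.2) (mem_sup_right z.2.2)⟩
  have hK : Function.Injective K := by
    rintro ⟨c₁, y₁⟩ ⟨c₂, y₂⟩ h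
    have h : (c₁.out : G) * y₁ = c₂.out * y₂ := congrArg Subtype.val h
    have hmem : (c₂.out : G)⁻¹ * c₁.out ∈ X ⊓ Y := by
      refine mem_inf.mpr ⟨mul_mem (inv_mem c₂.out.2) c₁.out.2, ?_⟩
      rw [show (c₂.out : G)⁻¹ * c₁.out = y₂ * (y₁ : G)⁻¹ by
        rw [inv_mul_eq_iff_eq_mul, ← mul_assoc, ← h, mul_inv_cancel_right]]
      exact mul_mem y₂.2 (inv_mem y₁.2)
    have hc : c₁ = c₂ := by
      rw [← QuotientGroup.out_eq' c₁, ← QuotientGroup.out_eq' c₂]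
      exact (QuotientGroup.eq.mpr (mem_subgroupOf.mpr (hXY hmem))).symm
    subst hc
    exact Prod.ext rfl (Subtype.ext (mul_left_cancel h))
  simpa only [Nat.card_prod] using Nat.card_le_card_of_injective K hK

section Replacement

variable {G : Type} [Group G] {A : Subgroup G} {v : G}

theorem commutator_mem_commSubgroup {a : G} (ha : a ∈ A) :
    v⁻¹ * a⁻¹ * v * a ∈ commSubgroup v A :=
  subset_closure ⟨a, ha, rfl⟩

variable [IsMulCommutative A] [IsMulCommutative (commSubgroup v A)]

theorem mem_centralizer_commSubgroup_of_commutator_mem {d : G} (hd : d ∈ A)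
    (hvd : v⁻¹ * d⁻¹ * v * d ∈ A) : d ∈ centralizer (commSubgroup v A : Set G) := by
  rw [commSubgroup, centralizer_closure]
  rintro _ ⟨a, ha, rfl⟩
  -- Expand `[v, ad] = [v, da]` in two ways and cancel `[v, d]`.
  have hexp : (v⁻¹ * d⁻¹ * v * d) * (d⁻¹ * (v⁻¹ * a⁻¹ * v * a) * d)
      = (v⁻¹ * a⁻¹ * v * a) * (a⁻¹ * (v⁻¹ * d⁻¹ * v * d) * a) := by
    calc _ = v⁻¹ * (a * d)⁻¹ * v * (a * d) := by group
      _ = v⁻¹ * (d * a)⁻¹ * v * (d * a) := by rw [setLike_mul_comm ha hd]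
      _ = _ := by group
  have hconj : a⁻¹ * (v⁻¹ * d⁻¹ * v * d) * a = v⁻¹ * d⁻¹ * v * d := by
    rw [mul_assoc, ← setLike_mul_comm ha hvd, inv_mul_cancel_left]
  rw [hconj, setLike_mul_comm (commutator_mem_commSubgroup ha)
    (commutator_mem_commSubgroup hd)] at hexp
  conv_rhs => rw [← mul_left_cancel hexp]
  group

theorem mul_inv_mem_centralizer_commSubgroup {a b : G} (ha : a ∈ A) (hb : b ∈ A)
    (hab : (v⁻¹ * a⁻¹ * v * a)⁻¹ * (v⁻¹ * b⁻¹ * v * b) ∈ A) :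
    b * a⁻¹ ∈ centralizer (commSubgroup v A : Set G) := by
  have hconj : (v⁻¹ * a⁻¹ * v * a)⁻¹ * (v⁻¹ * b⁻¹ * v * b)
      = a⁻¹ * (v⁻¹ * (b * a⁻¹)⁻¹ * v * (b * a⁻¹)) * a := by group
  refine mem_centralizer_commSubgroup_of_commutator_mem (mul_mem hb (inv_mem ha)) ?_
  rw [hconj] at hab
  exact (mul_mem_cancel_left (inv_mem ha)).mp ((mul_mem_cancel_right ha).mp hab)

theorem card_inf_le_card_replacementSubgroup_inf [Finite G] (M : Subgroup G) [M.Normal] :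
    Nat.card ↥(A ⊓ M) ≤ Nat.card ↥(replacementSubgroup v A ⊓ M) := by
  set N := commSubgroup v A
  set C := A ⊓ centralizer (N : Set G)
  have hcomm (a : ↥(A ⊓ M)) : v⁻¹ * (a : G)⁻¹ * v * a ∈ N ⊓ M := by
    obtain ⟨haA, haM⟩ := mem_inf.mp a.2
    refine mem_inf.mpr ⟨commutator_mem_commSubgroup haA, mul_mem ?_ haM⟩
    simpa only [inv_inv] using Normal.conj_mem ‹_› _ (inv_mem haM) v⁻¹
  let q : ↥(A ⊓ M) → ↥(N ⊓ M) ⧸ A.subgroupOf (N ⊓ M) := fun a => QuotientGroup.mk ⟨_, hcomm a⟩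
  have hq (a b : ↥(A ⊓ M)) (hab : q a = q b) : (b : G) * (a : G)⁻¹ ∈ C ⊓ M := by
    rw [QuotientGroup.eq, mem_subgroupOf] at hab
    obtain ⟨haA, haM⟩ := mem_inf.mp a.2
    obtain ⟨hbA, hbM⟩ := mem_inf.mp b.2
    exact mem_inf.mpr ⟨mem_inf.mpr ⟨mul_mem hbA (inv_mem haA),
      mul_inv_mem_centralizer_commSubgroup haA hbA hab⟩, mul_mem hbM (inv_mem haM)⟩
  calc Nat.card ↥(A ⊓ M)
      ≤ A.relIndex (N ⊓ M) * Nat.card ↥(C ⊓ M) := card_le_card_mul_card_of_mul_inv_mem q hq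
    _ ≤ Nat.card ↥(N ⊓ M ⊔ C ⊓ M) :=
        relIndex_mul_card_le_card_sup fun _ hx => (mem_inf.mp (mem_inf.mp (mem_inf.mp hx).2).1).1
    _ ≤ Nat.card ↥(replacementSubgroup v A ⊓ M) :=
        card_le_of_le (sup_le (inf_le_inf_right M le_sup_left) (inf_le_inf_right M le_sup_right))

end Replacement

theorem replacement_lemma_a_general
    (S : Type) [Group S] [Finite S]
    (A : Subgroup S) (hA : IsMulCommutative A) (v : S)
    -- `N = [v, A]` is abelian
    (hN : ∀ x ∈ commSubgroup v A, ∀ y ∈ commSubgroup v A, x * y = y * x) :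
    -- `A*` is abelian, `|A ∩ M| ≤ |A* ∩ M|` for all `M ⊴ S`, and `|A| ≤ |A*|`
    IsMulCommutative (replacementSubgroup v A) ∧
      (∀ M : Subgroup S, M.Normal →
        Nat.card ↥(A ⊓ M) ≤ Nat.card ↥(replacementSubgroup v A ⊓ M)) ∧
      Nat.card A ≤ Nat.card (replacementSubgroup v A) := by
  have : IsMulCommutative (commSubgroup v A) := .of_setLike_mul_comm hN
  have : IsMulCommutative ↥(A ⊓ centralizer (commSubgroup v A : Set S)) :=
    .of_setLike_mul_comm fun _ hx _ hy => setLike_mul_comm (mem_inf.mp hx).1 (mem_inf.mp hy).1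
  refine ⟨isMulCommutative_sup inf_le_right, fun M _ => card_inf_le_card_replacementSubgroup_inf M,
    ?_⟩
  simpa using card_inf_le_card_replacementSubgroup_inf (v := v) (⊤ : Subgroup S)

theorem replacement_lemma_a
    (p : ℕ) [Fact p.Prime]
    (S : Type) [Group S] [Finite S] (hS : IsPGroup p S)
    (A : Subgroup S) (hA : IsMulCommutative A) (v : S)
    -- `N = [v, A]` is abelian
    (hN : ∀ x ∈ commSubgroup v A, ∀ y ∈ commSubgroup v A, x * y = y * x) :
    -- `A*` is abelian, `|A ∩ M| ≤ |A* ∩ M|` for all `M ⊴ S`, and `|A| ≤ |A*|`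
    IsMulCommutative (replacementSubgroup v A) ∧
      (∀ M : Subgroup S, M.Normal →
        Nat.card ↥(A ⊓ M) ≤ Nat.card ↥(replacementSubgroup v A ⊓ M)) ∧
      Nat.card A ≤ Nat.card (replacementSubgroup v A) :=
  replacement_lemma_a_general S A hA v hN
end

section
/- Let S be a finite p-group and A an abelian subgroup of S. Let v ∈ S be an element for which N = [v, A] is abelian, and set A* = N·C_A(N). If 1 = Z_0 ≤ Z_1 ≤ ⋯ ≤ Z_n = S is a central series of S such that |A ∩ Z_i| = |A* ∩ Z_i| for all i = 1, …, n, then A* = A. -/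
open scoped commutatorElement

section

variable {S : Type} [Group S]

theorem commutatorElement_mem_of_commutator_top_le {H K : Subgroup S}
    (hHK : ⁅H, (⊤ : Subgroup S)⁆ ≤ K) (g : S) {a : S} (ha : a ∈ H) : ⁅g, a⁆ ∈ K :=
  hHK <| Subgroup.commutator_comm H ⊤ ▸ Subgroup.commutator_mem_commutator (Subgroup.mem_top g) ha

theorem commutator_mem_commSubgroup_s15 {v b : S} {A : Subgroup S} (hb : b ∈ A) :
    v⁻¹ * b⁻¹ * v * b ∈ commSubgroup v A :=
  Subgroup.subset_closure ⟨b, hb, rfl⟩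

theorem mem_centralizer_commSubgroup_iff {v c : S} {A : Subgroup S} :
    c ∈ Subgroup.centralizer (commSubgroup v A : Set S) ↔
      ∀ b ∈ A, Commute c (v⁻¹ * b⁻¹ * v * b) := by
  rw [commSubgroup, Subgroup.centralizer_closure, Subgroup.mem_centralizer_iff]
  constructor
  · exact fun h b hb => (h _ ⟨b, hb, rfl⟩).symm
  · rintro h _ ⟨b, hb, rfl⟩
    exact (h b hb).symm

theorem conj_mem_centralizer_commSubgroup {v a : S} {A : Subgroup S} [IsMulCommutative A]
    (ha : a ∈ A) (hconj : v⁻¹ * a * v ∈ A) :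
    v⁻¹ * a * v ∈ Subgroup.centralizer (commSubgroup v A : Set S) := by
  refine mem_centralizer_commSubgroup_iff.mpr fun b hb => ?_
  have hconj_inv : Commute (v⁻¹ * a * v) (v⁻¹ * b⁻¹ * v) := by
    simpa using Commute.conj (setLike_mul_comm ha (A.inv_mem hb)) v⁻¹
  exact hconj_inv.mul_right (setLike_mul_comm hconj hb)

theorem mem_centralizer_commSubgroup_of_conj_mem {v a : S} {A : Subgroup S} [IsMulCommutative A]
    (hN : ∀ x ∈ commSubgroup v A, ∀ y ∈ commSubgroup v A, x * y = y * x)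
    (ha : a ∈ A) (hconj : v⁻¹ * a * v ∈ A) :
    a ∈ Subgroup.centralizer (commSubgroup v A : Set S) := by
  have hgen_cent : v⁻¹ * a⁻¹ * v * a ∈ Subgroup.centralizer (commSubgroup v A : Set S) :=
    Subgroup.mem_centralizer_iff.mpr fun y hy => hN y hy _ (commutator_mem_commSubgroup_s15 ha)
  have hfactor : v⁻¹ * a * v * (v⁻¹ * a⁻¹ * v * a) = a := by group
  exact hfactor ▸ Subgroup.mul_mem _ (conj_mem_centralizer_commSubgroup ha hconj) hgen_cent

theorem inf_le_replacementSubgroup_inf {v : S} {A H K : Subgroup S} [IsMulCommutative A]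
    (hN : ∀ x ∈ commSubgroup v A, ∀ y ∈ commSubgroup v A, x * y = y * x)
    (hHK : ⁅H, (⊤ : Subgroup S)⁆ ≤ K) (hK : replacementSubgroup v A ⊓ K ≤ A) :
    A ⊓ H ≤ replacementSubgroup v A ⊓ H := by
  rintro a ⟨haA, haH⟩
  have hcomm_N : v⁻¹ * a * v * a⁻¹ ∈ commSubgroup v A := by
    simpa using commutator_mem_commSubgroup_s15 (v := v) (A.inv_mem haA)
  have hcomm_K : v⁻¹ * a * v * a⁻¹ ∈ K := by
    simpa [commutatorElement_def] using commutatorElement_mem_of_commutator_top_le hHK v⁻¹ haH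
  have hcomm_A : v⁻¹ * a * v * a⁻¹ ∈ A :=
    hK ⟨Subgroup.mem_sup_left hcomm_N, hcomm_K⟩
  have hconj : v⁻¹ * a * v ∈ A := by
    simpa using A.mul_mem hcomm_A haA
  exact ⟨Subgroup.mem_sup_right ⟨haA, mem_centralizer_commSubgroup_of_conj_mem hN haA hconj⟩, haH⟩

end

theorem replacement_lemma_b_general
    (S : Type) [Group S] [Finite S]
    (A : Subgroup S) (hA : IsMulCommutative A) (v : S)
    -- `N = [v, A]` is abelian
    (hN : ∀ x ∈ commSubgroup v A, ∀ y ∈ commSubgroup v A, x * y = y * x)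
    -- a central series `1 = Z 0 ≤ Z 1 ≤ ⋯ ≤ Z n = S` of `S`
    (n : ℕ) (Z : ℕ → Subgroup S)
    (hZ0 : Z 0 = ⊥) (hZn : Z n = ⊤)
    (hZcentral : ∀ i, ⁅Z (i + 1), (⊤ : Subgroup S)⁆ ≤ Z i)
    -- `|A ∩ Z_i| = |A* ∩ Z_i|` for all `i = 1, …, n`
    (hcard : ∀ i, 1 ≤ i → i ≤ n →
      Nat.card ↥(A ⊓ Z i) = Nat.card ↥(replacementSubgroup v A ⊓ Z i)) :
    replacementSubgroup v A = A := by
  have hinf_eq : ∀ i ≤ n, A ⊓ Z i = replacementSubgroup v A ⊓ Z i := by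
    intro i
    induction i with
    | zero => simp [hZ0]
    | succ i ih =>
      intro hin
      have hK : replacementSubgroup v A ⊓ Z i ≤ A := (ih (by omega)).symm ▸ inf_le_left
      exact Subgroup.eq_of_le_of_card_ge (inf_le_replacementSubgroup_inf hN (hZcentral i) hK)
        (hcard (i + 1) (by omega) hin).ge
  simpa [hZn] using (hinf_eq n le_rfl).symm

theorem replacement_lemma_b
    (p : ℕ) [Fact p.Prime]
    (S : Type) [Group S] [Finite S] (hS : IsPGroup p S)
    (A : Subgroup S) (hA : IsMulCommutative A) (v : S)
    -- `N = [v, A]` is abelian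
    (hN : ∀ x ∈ commSubgroup v A, ∀ y ∈ commSubgroup v A, x * y = y * x)
    -- a central series `1 = Z 0 ≤ Z 1 ≤ ⋯ ≤ Z n = S` of `S`
    (n : ℕ) (Z : ℕ → Subgroup S)
    (hZ0 : Z 0 = ⊥) (hZn : Z n = ⊤)
    (hZmono : ∀ i, Z i ≤ Z (i + 1))
    (hZcentral : ∀ i, ⁅Z (i + 1), (⊤ : Subgroup S)⁆ ≤ Z i)
    -- `|A ∩ Z_i| = |A* ∩ Z_i|` for all `i = 1, …, n`
    (hcard : ∀ i, 1 ≤ i → i ≤ n →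
      Nat.card ↥(A ⊓ Z i) = Nat.card ↥(replacementSubgroup v A ⊓ Z i)) :
    replacementSubgroup v A = A :=
  replacement_lemma_b_general S A hA v hN n Z hZ0 hZn hZcentral hcard
end
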